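/- Let A be a unital Banach algebra and X a unit-linked Banach A-bimodule. Let p < 1 and θ ≥ 0. Suppose f : A → X satisfies f(0) = 0 and g : A → X satisfies g(0) = g(1) = 0, such that ‖f(a + λb + c²) − f(a) − λf(b) − c·f(c) − g(c)·c‖ ≤ θ‖f(c)‖ and ‖g(λab + λc) − λa·g(b) − λ·g(a)·b − λg(c)‖ ≤ θ(‖a‖^p + ‖b‖^p + ‖c‖^p) for all a, b, c ∈ A and all λ ∈ ℂ with |λ| = 1. Then f is a generalized Jordan derivation: f is ℂ-linear and there exists a Jordan derivation δ : A → X with f(a²) = a·f(a) + δ(a)·a for all a ∈ A. -/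

import Mathlib

/-!
Taking `c = 0` in the first inequality makes `f` additive and commuting with unimodular scalars;
since every complex number of modulus at most one is the mean of two unimodular ones, `f` is
`ℂ`-linear. Specialising the second inequality shows that `g` is additive, commutes with unimodular
scalars and satisfies the Jordan identity up to errors `O(1 + ‖x‖ ^ p)`. As `2 ^ p < 2`, Hyers'
sequence `2⁻ⁿ g(2ⁿ x)` converges to a map `δ` satisfying all three exactly, i.e. a Jordan
derivation. Finally, the first inequality with `a = b = 0` and `c = 2ⁿ a`, divided by `4ⁿ`, gives
`‖f(a²) - a·f(a) - 2⁻ⁿ g(2ⁿ a)·a‖ ≤ 2⁻ⁿ θ ‖f a‖`, and `n → ∞` yields `f(a²) = a·f(a) + δ(a)·a`.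
-/

open Filter Topology MulOpposite

theorem Complex.exists_norm_eq_one_add_eq_two_mul {z : ℂ} (hz : ‖z‖ ≤ 1) :
    ∃ μ₁ μ₂ : ℂ, ‖μ₁‖ = 1 ∧ ‖μ₂‖ = 1 ∧ μ₁ + μ₂ = 2 * z := by
  rcases eq_or_ne z 0 with rfl | hz0
  · exact ⟨1, -1, by simp, by simp, by ring⟩
  have hr : 0 < ‖z‖ := norm_pos_iff.2 hz0
  set t : ℝ := √(1 - ‖z‖ ^ 2) / ‖z‖
  have ht : 1 + t ^ 2 = ‖z‖⁻¹ ^ 2 := by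
    rw [div_pow, Real.sq_sqrt (by nlinarith [norm_nonneg z])]
    field_simp
    ring
  have hnorm : ∀ s : ℝ, s ^ 2 = t ^ 2 → ‖z * (1 + s * I)‖ = 1 := by
    intro s hs
    rw [norm_mul, ← ofReal_one, norm_add_mul_I, one_pow, hs, ht,
      Real.sqrt_sq (inv_nonneg.2 hr.le), mul_inv_cancel₀ hr.ne']
  exact ⟨z * (1 + t * I), z * (1 + (-t : ℝ) * I), hnorm t rfl, hnorm (-t) (neg_sq t),
    by push_cast; ring⟩

theorem AddMonoidHom.map_smul_of_map_smul_of_norm_eq_one {V W : Type*} [AddCommGroup V]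
    [Module ℂ V] [AddCommGroup W] [Module ℂ W] (q : V →+ W)
    (hq : ∀ μ : ℂ, ‖μ‖ = 1 → ∀ x, q (μ • x) = μ • q x) (μ : ℂ) (x : V) :
    q (μ • x) = μ • q x := by
  have hball : ∀ ν : ℂ, ‖ν‖ ≤ 1 → q (ν • x) = ν • q x := by
    intro ν hν
    obtain ⟨μ₁, μ₂, h₁, h₂, hsum⟩ := Complex.exists_norm_eq_one_add_eq_two_mul hν
    apply smul_right_injective W (two_ne_zero : (2 : ℂ) ≠ 0)
    calc (2 : ℂ) • q (ν • x) = q ((μ₁ + μ₂) • x) := by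
          rw [hsum, mul_smul, two_smul, two_smul, map_add]
      _ = (2 : ℂ) • ν • q x := by
          rw [add_smul, map_add, hq μ₁ h₁, hq μ₂ h₂, ← add_smul, hsum, mul_smul]
  obtain ⟨n, hμn⟩ := exists_nat_gt ‖μ‖
  have hn₀ : (0 : ℝ) < n := (norm_nonneg μ).trans_lt hμn
  have hn : (n : ℂ) ≠ 0 := Nat.cast_ne_zero.2 (Nat.cast_pos.1 hn₀).ne'
  have hle : ‖μ / n‖ ≤ 1 := by
    rw [norm_div, Complex.norm_natCast, div_le_one hn₀]
    exact hμn.le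
  calc q (μ • x) = q (n • (μ / n) • x) := by
        rw [← Nat.cast_smul_eq_nsmul ℂ, smul_smul, mul_div_cancel₀ _ hn]
    _ = μ • q x := by
        rw [map_nsmul, hball _ hle, ← Nat.cast_smul_eq_nsmul ℂ, smul_smul, mul_div_cancel₀ _ hn]

theorem tendsto_inv_pow_mul_add_mul_pow {B Q : ℝ} (hB : 1 < B) (hQ : 0 ≤ Q) (hQB : Q < B)
    (c₁ c₂ : ℝ) : Tendsto (fun n : ℕ => (B ^ n)⁻¹ * (c₁ + c₂ * Q ^ n)) atTop (𝓝 0) := by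
  have hB₀ : 0 < B := one_pos.trans hB
  have h₁ := (tendsto_pow_atTop_nhds_zero_of_lt_one (inv_nonneg.2 hB₀.le)
    (inv_lt_one_of_one_lt₀ hB)).const_mul c₁
  have h₂ := (tendsto_pow_atTop_nhds_zero_of_lt_one (div_nonneg hQ hB₀.le)
    ((div_lt_one hB₀).2 hQB)).const_mul c₂
  convert h₁.add h₂ using 1
  · ext n
    rw [inv_pow, div_pow]
    ring
  · rw [mul_zero, mul_zero, add_zero]

theorem Filter.Tendsto.of_norm_sub_le_inv_pow_mul {Y : Type*} [SeminormedAddCommGroup Y]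
    {u v : ℕ → Y} {L : Y} {B Q c₁ c₂ : ℝ} (hu : Tendsto u atTop (𝓝 L)) (hB : 1 < B)
    (hQ : 0 ≤ Q) (hQB : Q < B) (h : ∀ n, ‖v n - u n‖ ≤ (B ^ n)⁻¹ * (c₁ + c₂ * Q ^ n)) :
    Tendsto v atTop (𝓝 L) :=
  hu.congr_dist <| squeeze_zero (fun _ => dist_nonneg)
    (fun n => (dist_comm _ _).trans_le <| (dist_eq_norm _ _).trans_le (h n))
    (tendsto_inv_pow_mul_add_mul_pow hB hQ hQB c₁ c₂)

section Hyers

variable {E Y : Type*} [NormedAddCommGroup E] [NormedSpace ℂ E]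
  [NormedAddCommGroup Y] [NormedSpace ℂ Y]

noncomputable def hyersSeq (g : E → Y) (n : ℕ) (x : E) : Y := ((2 : ℂ) ^ n)⁻¹ • g ((2 : ℂ) ^ n • x)

noncomputable def hyersLimit (g : E → Y) (x : E) : Y := limUnder atTop fun n => hyersSeq g n x

theorem norm_two_pow_smul_rpow (p : ℝ) (n : ℕ) (x : E) :
    ‖(2 : ℂ) ^ n • x‖ ^ p = (2 ^ p) ^ n * ‖x‖ ^ p := by
  rw [norm_smul, norm_pow, Complex.norm_two, Real.mul_rpow (by positivity) (norm_nonneg x),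
    Real.rpow_pow_comm zero_le_two]

theorem norm_inv_two_pow_smul (n : ℕ) (v : Y) : ‖((2 : ℂ) ^ n)⁻¹ • v‖ = (2 ^ n)⁻¹ * ‖v‖ := by
  rw [norm_smul, norm_inv, norm_pow, Complex.norm_two]

theorem norm_inv_two_pow_sq_smul (n : ℕ) (v : Y) :
    ‖(((2 : ℂ) ^ n) ^ 2)⁻¹ • v‖ = (4 ^ n)⁻¹ * ‖v‖ := by
  rw [← pow_mul', norm_inv_two_pow_smul, pow_mul]
  norm_num

variable {g : E → Y} {p α β : ℝ}

theorem two_rpow_lt_two (hp : p < 1) : (2 : ℝ) ^ p < 2 := by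
  simpa using Real.rpow_lt_rpow_of_exponent_lt one_lt_two hp

theorem norm_hyersSeq_succ_sub_le
    (hg : ∀ x y, ‖g (x + y) - g x - g y‖ ≤ α + β * (‖x‖ ^ p + ‖y‖ ^ p)) (n : ℕ) (x : E) :
    ‖hyersSeq g (n + 1) x - hyersSeq g n x‖ ≤ α / 2 * 2⁻¹ ^ n + β * ‖x‖ ^ p * (2 ^ p / 2) ^ n := by
  set y := (2 : ℂ) ^ n • x
  have hy : (2 : ℂ) ^ (n + 1) • x = y + y := by rw [← two_smul ℂ, smul_smul, pow_succ']
  have hdiff : hyersSeq g (n + 1) x - hyersSeq g n x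
      = ((2 : ℂ) ^ (n + 1))⁻¹ • (g (y + y) - g y - g y) := by
    simp only [hyersSeq, hy]
    module
  rw [hdiff, norm_inv_two_pow_smul]
  calc (2 ^ (n + 1))⁻¹ * ‖g (y + y) - g y - g y‖
      ≤ (2 ^ (n + 1))⁻¹ * (α + β * (2 * ((2 ^ p) ^ n * ‖x‖ ^ p))) := by
        gcongr
        simpa only [y, norm_two_pow_smul_rpow, ← two_mul] using hg y y
    _ = α / 2 * 2⁻¹ ^ n + β * ‖x‖ ^ p * (2 ^ p / 2) ^ n := by
        rw [inv_pow, div_pow]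
        field_simp
        ring

theorem cauchySeq_hyersSeq (hp : p < 1)
    (hg : ∀ x y, ‖g (x + y) - g x - g y‖ ≤ α + β * (‖x‖ ^ p + ‖y‖ ^ p)) (x : E) :
    CauchySeq fun n => hyersSeq g n x := by
  have hQ : (2 : ℝ) ^ p / 2 < 1 := (div_lt_one two_pos).2 (two_rpow_lt_two hp)
  refine cauchySeq_of_summable_dist <| Summable.of_nonneg_of_le (fun _ => dist_nonneg)
    (fun n => (dist_comm _ _).trans_le <| (dist_eq_norm _ _).trans_le <|
      norm_hyersSeq_succ_sub_le hg n x) ?_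
  exact ((summable_geometric_of_lt_one (by norm_num) (by norm_num)).mul_left (α / 2)).add
    ((summable_geometric_of_lt_one (by positivity) hQ).mul_left (β * ‖x‖ ^ p))

variable [CompleteSpace Y]

theorem tendsto_hyersSeq (hp : p < 1)
    (hg : ∀ x y, ‖g (x + y) - g x - g y‖ ≤ α + β * (‖x‖ ^ p + ‖y‖ ^ p)) (x : E) :
    Tendsto (fun n => hyersSeq g n x) atTop (𝓝 (hyersLimit g x)) :=
  (cauchySeq_hyersSeq hp hg x).tendsto_limUnder

theorem hyersLimit_add (hp : p < 1)
    (hg : ∀ x y, ‖g (x + y) - g x - g y‖ ≤ α + β * (‖x‖ ^ p + ‖y‖ ^ p)) (x y : E) :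
    hyersLimit g (x + y) = hyersLimit g x + hyersLimit g y := by
  refine tendsto_nhds_unique (tendsto_hyersSeq hp hg (x + y)) <|
    ((tendsto_hyersSeq hp hg x).add (tendsto_hyersSeq hp hg y)).of_norm_sub_le_inv_pow_mul
      one_lt_two (by positivity) (two_rpow_lt_two hp) (c₁ := α)
      (c₂ := β * (‖x‖ ^ p + ‖y‖ ^ p)) fun n => ?_
  have hdiff : hyersSeq g n (x + y) - (hyersSeq g n x + hyersSeq g n y)
      = ((2 : ℂ) ^ n)⁻¹ • (g ((2 : ℂ) ^ n • x + (2 : ℂ) ^ n • y) - g ((2 : ℂ) ^ n • x)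
          - g ((2 : ℂ) ^ n • y)) := by
    simp only [hyersSeq, smul_add]
    module
  rw [hdiff, norm_inv_two_pow_smul]
  gcongr
  refine (hg _ _).trans_eq ?_
  rw [norm_two_pow_smul_rpow, norm_two_pow_smul_rpow]
  ring

theorem hyersLimit_smul (hp : p < 1)
    (hg : ∀ x y, ‖g (x + y) - g x - g y‖ ≤ α + β * (‖x‖ ^ p + ‖y‖ ^ p)) {γ κ : ℝ}
    (hgμ : ∀ μ : ℂ, ‖μ‖ = 1 → ∀ x, ‖g (μ • x) - μ • g x‖ ≤ γ + κ * ‖x‖ ^ p) (μ : ℂ) (x : E) :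
    hyersLimit g (μ • x) = μ • hyersLimit g x := by
  refine (AddMonoidHom.mk' (hyersLimit g)
    (hyersLimit_add hp hg)).map_smul_of_map_smul_of_norm_eq_one (fun μ hμ x => ?_) μ x
  refine tendsto_nhds_unique (tendsto_hyersSeq hp hg (μ • x)) <|
    ((tendsto_hyersSeq hp hg x).const_smul μ).of_norm_sub_le_inv_pow_mul
      one_lt_two (by positivity) (two_rpow_lt_two hp) (c₁ := γ) (c₂ := κ * ‖x‖ ^ p) fun n => ?_
  have hdiff : hyersSeq g n (μ • x) - μ • hyersSeq g n x
      = ((2 : ℂ) ^ n)⁻¹ • (g (μ • (2 : ℂ) ^ n • x) - μ • g ((2 : ℂ) ^ n • x)) := by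
    simp only [hyersSeq, smul_comm μ]
    module
  rw [hdiff, norm_inv_two_pow_smul]
  gcongr
  refine (hgμ μ hμ _).trans_eq ?_
  rw [norm_two_pow_smul_rpow]
  ring

end Hyers

theorem inv_sq_smul_smul_smul {B M : Type*} [Semiring B] [Algebra ℂ B] [AddCommMonoid M]
    [Module ℂ M] [Module B M] [IsScalarTower ℂ B M] (c : ℂ) (b : B) (v : M) :
    (c ^ 2)⁻¹ • (c • b) • v = b • c⁻¹ • v := by
  rw [smul_assoc, smul_smul, smul_comm b]
  congr 1
  rcases eq_or_ne c 0 with rfl | hc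
  · simp
  · field_simp

set_option linter.unusedSectionVars false
set_option linter.unusedVariables false

section

variable {A X : Type*}
  [NormedRing A] [NormedAlgebra ℂ A] [CompleteSpace A]
  [NormedAddCommGroup X] [NormedSpace ℂ X] [CompleteSpace X]
  [Module A X] [Module Aᵐᵒᵖ X]
  [IsBoundedSMul A X] [IsBoundedSMul Aᵐᵒᵖ X]
  [SMulCommClass A Aᵐᵒᵖ X]
  [IsScalarTower ℂ A X] [IsScalarTower ℂ Aᵐᵒᵖ X]

/-- A Jordan derivation from `A` into the bimodule `X`: a `ℂ`-linear map `δ` with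
`δ(a²) = a·δ(a) + δ(a)·a`. -/
def IsJordanDeriv (δ : A → X) : Prop :=
  (∀ x y : A, δ (x + y) = δ x + δ y) ∧ (∀ (μ : ℂ) (x : A), δ (μ • x) = μ • δ x) ∧
    ∀ a : A, δ (a ^ 2) = a • δ a + op a • δ a

/-- A generalized Jordan derivation: a `ℂ`-linear map `d` such that there is a Jordan
derivation `δ` with `d(a²) = a·d(a) + δ(a)·a`. -/
def IsGenJordanDeriv (d : A → X) : Prop :=
  (∀ x y : A, d (x + y) = d x + d y) ∧ (∀ (μ : ℂ) (x : A), d (μ • x) = μ • d x) ∧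
    ∃ δ : A → X, IsJordanDeriv δ ∧ ∀ a : A, d (a ^ 2) = a • d a + op a • δ a

theorem hyersLimit_sq {g : A → X} {p α β γ κ : ℝ} (hp : p < 1)
    (hg : ∀ x y, ‖g (x + y) - g x - g y‖ ≤ α + β * (‖x‖ ^ p + ‖y‖ ^ p))
    (hsq : ∀ x : A, ‖g (x ^ 2) - x • g x - op x • g x‖ ≤ γ + κ * ‖x‖ ^ p) (a : A) :
    hyersLimit g (a ^ 2) = a • hyersLimit g a + op a • hyersLimit g a := by
  have hsub : Tendsto (fun n => hyersSeq g (2 * n) (a ^ 2)) atTop (𝓝 (hyersLimit g (a ^ 2))) :=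
    (tendsto_hyersSeq hp hg _).comp <|
      tendsto_atTop_mono (fun n => Nat.le_mul_of_pos_left n two_pos) tendsto_id
  refine tendsto_nhds_unique hsub <|
    (((tendsto_hyersSeq hp hg a).const_smul a).add
      ((tendsto_hyersSeq hp hg a).const_smul (op a))).of_norm_sub_le_inv_pow_mul
      (B := 4) (by norm_num) (by positivity) ((two_rpow_lt_two hp).trans (by norm_num))
      (c₁ := γ) (c₂ := κ * ‖a‖ ^ p) fun n => ?_
  set c := (2 : ℂ) ^ n
  have hdiff : hyersSeq g (2 * n) (a ^ 2) - (a • hyersSeq g n a + op a • hyersSeq g n a)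
      = (c ^ 2)⁻¹ • (g ((c • a) ^ 2) - (c • a) • g (c • a) - op (c • a) • g (c • a)) := by
    rw [smul_sub, smul_sub, inv_sq_smul_smul_smul, op_smul, inv_sq_smul_smul_smul,
      smul_pow, hyersSeq, hyersSeq, pow_mul']
    abel
  rw [hdiff, norm_inv_two_pow_sq_smul]
  gcongr
  refine (hsq _).trans_eq ?_
  rw [norm_two_pow_smul_rpow]
  ring

theorem isJordanDeriv_hyersLimit {g : A → X} {p α β γ κ γ' κ' : ℝ} (hp : p < 1)
    (hg : ∀ x y, ‖g (x + y) - g x - g y‖ ≤ α + β * (‖x‖ ^ p + ‖y‖ ^ p))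
    (hgμ : ∀ μ : ℂ, ‖μ‖ = 1 → ∀ x, ‖g (μ • x) - μ • g x‖ ≤ γ + κ * ‖x‖ ^ p)
    (hsq : ∀ x : A, ‖g (x ^ 2) - x • g x - op x • g x‖ ≤ γ' + κ' * ‖x‖ ^ p) :
    IsJordanDeriv (hyersLimit g) :=
  ⟨hyersLimit_add hp hg, hyersLimit_smul hp hg hgμ, hyersLimit_sq hp hg hsq⟩

theorem LinearMap.map_sq_of_norm_sub_le (f : A →ₗ[ℂ] X) {g : A → X} {δ : A → X} {θ : ℝ}
    (hf : ∀ c : A, ‖f (c ^ 2) - c • f c - op c • g c‖ ≤ θ * ‖f c‖)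
    (hδ : ∀ a, Tendsto (fun n => hyersSeq g n a) atTop (𝓝 (δ a))) (a : A) :
    f (a ^ 2) = a • f a + op a • δ a := by
  refine tendsto_nhds_unique tendsto_const_nhds <|
    (tendsto_const_nhds.add ((hδ a).const_smul (op a))).of_norm_sub_le_inv_pow_mul
      (B := 4) (Q := 2) (by norm_num) (by norm_num) (by norm_num)
      (c₁ := 0) (c₂ := θ * ‖f a‖) fun n => ?_
  set c := (2 : ℂ) ^ n
  have hc : c ≠ 0 := pow_ne_zero n two_ne_zero
  have hdiff : f (a ^ 2) - (a • f a + op a • hyersSeq g n a)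
      = (c ^ 2)⁻¹ • (f ((c • a) ^ 2) - (c • a) • f (c • a) - op (c • a) • g (c • a)) := by
    rw [smul_sub, smul_sub, inv_sq_smul_smul_smul, op_smul, inv_sq_smul_smul_smul,
      smul_pow, map_smul, map_smul, inv_smul_smul₀ hc, inv_smul_smul₀ (pow_ne_zero 2 hc),
      hyersSeq]
    abel
  rw [hdiff, norm_inv_two_pow_sq_smul]
  gcongr
  refine (hf _).trans_eq ?_
  rw [map_smul, norm_smul, norm_pow, Complex.norm_two]
  ring

theorem stmt_general (f g : A → X) (θ p : ℝ) (hp : p < 1)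
    (hf0 : f 0 = 0) (hg0 : g 0 = 0) (hg1 : g 1 = 0)
    (h1 : ∀ (a b c : A) (μ : ℂ), ‖μ‖ = 1 →
      ‖f (a + μ • b + c ^ 2) - f a - μ • f b - c • f c - op c • g c‖ ≤ θ * ‖f c‖)
    (h2 : ∀ (a b c : A) (μ : ℂ), ‖μ‖ = 1 →
      ‖g (μ • (a * b) + μ • c) - μ • a • g b - μ • op b • g a - μ • g c‖ ≤
        θ * (‖a‖ ^ p + ‖b‖ ^ p + ‖c‖ ^ p)) :
    IsGenJordanDeriv f := by
  have hf_add : ∀ x y : A, f (x + y) = f x + f y := fun x y => by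
    simpa [hf0, sub_sub, sub_eq_zero] using h1 x y 0 1 (by simp)
  have hf_unit : ∀ μ : ℂ, ‖μ‖ = 1 → ∀ x : A, f (μ • x) = μ • f x := fun μ hμ x => by
    simpa [hf0, sub_eq_zero] using h1 0 x 0 μ hμ
  let F : A →ₗ[ℂ] X :=
    { toFun := f
      map_add' := hf_add
      map_smul' := (AddMonoidHom.mk' f hf_add).map_smul_of_map_smul_of_norm_eq_one hf_unit }
  have hg_add : ∀ x y : A, ‖g (x + y) - g x - g y‖ ≤ θ * ‖(1 : A)‖ ^ p + θ * (‖x‖ ^ p + ‖y‖ ^ p) :=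
    fun x y => by simpa [hg1, mul_add, add_assoc] using h2 1 x y 1 (by simp)
  have hg_unit : ∀ μ : ℂ, ‖μ‖ = 1 → ∀ x : A,
      ‖g (μ • x) - μ • g x‖ ≤ θ * (0 ^ p + 0 ^ p) + θ * ‖x‖ ^ p :=
    fun μ hμ x => by simpa [mul_add] using h2 0 0 x μ hμ
  have hg_sq : ∀ x : A, ‖g (x ^ 2) - x • g x - op x • g x‖ ≤ θ * 0 ^ p + 2 * θ * ‖x‖ ^ p :=
    fun x => by simpa [hg0, sq, two_mul, add_mul, mul_add, add_comm] using h2 x x 0 1 (by simp)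
  have hf_sq : ∀ c : A, ‖f (c ^ 2) - c • f c - op c • g c‖ ≤ θ * ‖f c‖ :=
    fun c => by simpa [hf0] using h1 0 0 c 1 (by simp)
  exact ⟨hf_add, F.map_smul, hyersLimit g, isJordanDeriv_hyersLimit hp hg_add hg_unit hg_sq,
    F.map_sq_of_norm_sub_le hf_sq (tendsto_hyersSeq hp hg_add)⟩

theorem stmt (f g : A → X) (θ p : ℝ) (hθ : 0 ≤ θ) (hp : p < 1)
    (hf0 : f 0 = 0) (hg0 : g 0 = 0) (hg1 : g 1 = 0)
    (h1 : ∀ (a b c : A) (μ : ℂ), ‖μ‖ = 1 →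
      ‖f (a + μ • b + c ^ 2) - f a - μ • f b - c • f c - op c • g c‖ ≤ θ * ‖f c‖)
    (h2 : ∀ (a b c : A) (μ : ℂ), ‖μ‖ = 1 →
      ‖g (μ • (a * b) + μ • c) - μ • a • g b - μ • op b • g a - μ • g c‖ ≤
        θ * (‖a‖ ^ p + ‖b‖ ^ p + ‖c‖ ^ p)) :
    IsGenJordanDeriv f :=
  stmt_general f g θ p hp hf0 hg0 hg1 h1 h2
end
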